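/- For d = 1, the characteristics Y^k solving ∂_t Y^k_t = −Y^k_t / ((Y^k_t)² + 1/k)^{1/2} with Y^k_0 = y_0 converge, as k → ∞, pointwise for each t ∈ [0, |y_0|] to Y_t(y_0) = y_0 − sign(y_0) t. -/

import Mathlib

open Filter Set Topology

/-!
For `y₀ > 0` the defect `1 - Y/√(Y² + ε)` of the speed from `1` is nonnegative, so
`Y t + t` is nondecreasing and `Y t ≥ y₀ - t`. Conversely, as long as `Y ≥ y₀ - t ≥ 0`
the defect is at most `ε/(Y² + ε) ≤ 4ε/(y₀ - t + √ε)²`, whose integral over `[0, y₀]` is at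
most `4√ε`. Hence `|Yᵏ t - (y₀ - t)| ≤ 4/√k` on `[0, y₀]`; the case `y₀ < 0` follows by the
symmetry `Y ↦ -Y` of the equation.
-/

lemma one_sub_div_sqrt_sq_add_le {y a ε : ℝ} (hε : 0 < ε) (ha : 0 ≤ a) (hay : a ≤ y) :
    1 - y / √(y ^ 2 + ε) ≤ 4 * ε / (a + √ε) ^ 2 := by
  set v := √(y ^ 2 + ε)
  have hv2 : v ^ 2 = y ^ 2 + ε := Real.sq_sqrt (by positivity)
  have hv : 0 < v := Real.sqrt_pos.2 (by positivity)
  have hyv : y ≤ v := Real.le_sqrt_of_sq_le (by linarith)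
  have hsv : √ε ≤ v := Real.sqrt_le_sqrt (by nlinarith)
  have hvy : 0 < v + y := by linarith
  calc 1 - y / v = ε / (v * (v + y)) := by
        field_simp
        linear_combination hv2
    _ ≤ ε / v ^ 2 := div_le_div_of_nonneg_left hε.le (by positivity) (by nlinarith)
    _ = 4 * ε / (2 * v) ^ 2 := by ring
    _ ≤ 4 * ε / (a + √ε) ^ 2 :=
        div_le_div_of_nonneg_left (by positivity) (by positivity)
          (pow_le_pow_left₀ (by positivity) (by linarith) 2)

section RegularizedSignFlow

variable {ε : ℝ} {Y : ℝ → ℝ}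

lemma sub_le_of_hasDerivAt_neg_div_sqrt (hε : 0 ≤ ε)
    (hY : ∀ t, HasDerivAt Y (-(Y t) / √(Y t ^ 2 + ε)) t) {t : ℝ} (ht : 0 ≤ t) :
    Y 0 - t ≤ Y t := by
  have hmono : Monotone (fun u => Y u + u) := by
    refine monotone_of_hasDerivAt_nonneg (fun u => (hY u).add (hasDerivAt_id u)) fun u => ?_
    have : Y u / √(Y u ^ 2 + ε) ≤ 1 :=
      div_le_one_of_le₀ (Real.le_sqrt_of_sq_le (by linarith)) (Real.sqrt_nonneg _)
    simp only [Pi.zero_apply, neg_div]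
    linarith
  linarith [hmono ht]

lemma le_sub_add_of_hasDerivAt_neg_div_sqrt (hε : 0 < ε)
    (hY : ∀ t, HasDerivAt Y (-(Y t) / √(Y t ^ 2 + ε)) t) {t : ℝ} (ht : t ∈ Icc 0 (Y 0)) :
    Y t ≤ Y 0 - t + 4 * √ε := by
  set s := √ε
  have hs : 0 < s := Real.sqrt_pos.2 hε
  have hcorr : ∀ u < Y 0 + s,
      HasDerivAt (fun u => 4 * ε / (Y 0 - u + s)) (4 * ε / (Y 0 - u + s) ^ 2) u := by
    intro u hu
    have hden : HasDerivAt (fun u => Y 0 - u + s) (-1) u :=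
      ((hasDerivAt_id' u).const_sub _).add_const s
    exact ((hasDerivAt_const u (4 * ε)).fun_div hden (by linarith)).congr_deriv (by ring)
  have hanti : AntitoneOn (fun u => Y u + u - 4 * ε / (Y 0 - u + s)) (Icc 0 (Y 0)) := by
    have hderiv : ∀ u ∈ Icc 0 (Y 0), HasDerivAt (fun u => Y u + u - 4 * ε / (Y 0 - u + s))
        (-(Y u) / √(Y u ^ 2 + ε) + 1 - 4 * ε / (Y 0 - u + s) ^ 2) u := fun u hu =>
      ((hY u).add (hasDerivAt_id u)).sub (hcorr u (by linarith [hu.2]))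
    refine antitoneOn_of_hasDerivWithinAt_nonpos (convex_Icc _ _)
      (fun u hu => (hderiv u hu).continuousAt.continuousWithinAt)
      (fun u hu => (hderiv u (interior_subset hu)).hasDerivWithinAt) fun u hu => ?_
    have hu' := interior_subset hu
    have := one_sub_div_sqrt_sq_add_le hε (sub_nonneg.2 hu'.2)
      (sub_le_of_hasDerivAt_neg_div_sqrt hε.le hY hu'.1)
    rw [neg_div]
    linarith
  have hmono := hanti ⟨le_rfl, ht.1.trans ht.2⟩ ht ht.1
  have hcorr0 : 0 ≤ 4 * ε / (Y 0 - 0 + s) :=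
    div_nonneg (by positivity) (by linarith [ht.1.trans ht.2])
  have hcorrt : 4 * ε / (Y 0 - t + s) ≤ 4 * s :=
    calc 4 * ε / (Y 0 - t + s) ≤ 4 * (ε / s) := by
          rw [mul_div_assoc]
          gcongr
          linarith [ht.2]
      _ = 4 * s := by rw [Real.div_sqrt]
  dsimp only at hmono
  linarith

lemma abs_sub_sub_le_of_hasDerivAt_neg_div_sqrt (hε : 0 < ε)
    (hY : ∀ t, HasDerivAt Y (-(Y t) / √(Y t ^ 2 + ε)) t) {t : ℝ} (ht : t ∈ Icc 0 (Y 0)) :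
    |Y t - (Y 0 - t)| ≤ 4 * √ε :=
  abs_sub_le_iff.2 ⟨by linarith [le_sub_add_of_hasDerivAt_neg_div_sqrt hε hY ht],
    by linarith [sub_le_of_hasDerivAt_neg_div_sqrt hε.le hY ht.1, Real.sqrt_nonneg ε]⟩

lemma abs_sub_sub_sign_mul_le_of_hasDerivAt_neg_div_sqrt (hε : 0 < ε)
    (hY : ∀ t, HasDerivAt Y (-(Y t) / √(Y t ^ 2 + ε)) t) {t : ℝ} (ht : t ∈ Icc 0 |Y 0|) :
    |Y t - (Y 0 - Real.sign (Y 0) * t)| ≤ 4 * √ε := by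
  rcases lt_trichotomy (Y 0) 0 with hneg | hzero | hpos
  · have hY' : ∀ t, HasDerivAt (-Y) (-((-Y) t) / √((-Y) t ^ 2 + ε)) t := fun t => by
      simpa [neg_div] using (hY t).neg
    have := abs_sub_sub_le_of_hasDerivAt_neg_div_sqrt hε hY' (t := t)
      (by simpa [abs_of_neg hneg] using ht)
    rw [Real.sign_of_neg hneg, ← abs_neg]
    convert this using 2
    simp only [Pi.neg_apply]
    ring
  · rw [hzero, abs_zero, Icc_self, mem_singleton_iff] at ht
    simp [ht, hzero]
  · rw [Real.sign_of_pos hpos, one_mul]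
    exact abs_sub_sub_le_of_hasDerivAt_neg_div_sqrt hε hY (by rwa [abs_of_pos hpos] at ht)

end RegularizedSignFlow

theorem stmt14_general (y₀ : ℝ) (Y : ℕ → ℝ → ℝ)
    (hY0 : ∀ k : ℕ, 1 ≤ k → Y k 0 = y₀)
    (hODE : ∀ k : ℕ, 1 ≤ k → ∀ t : ℝ,
      HasDerivAt (Y k) (-(Y k t) / Real.sqrt ((Y k t) ^ 2 + 1 / (k : ℝ))) t) :
    ∀ t ∈ Set.Icc (0 : ℝ) |y₀|,
      Tendsto (fun k : ℕ => Y k t) atTop (nhds (y₀ - Real.sign y₀ * t)) := by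
  intro t ht
  have hbound : ∀ᶠ k : ℕ in atTop,
      ‖Y k t - (y₀ - Real.sign y₀ * t)‖ ≤ 4 * √(1 / (k : ℝ)) := by
    filter_upwards [eventually_ge_atTop 1] with k hk
    have hε : (0 : ℝ) < 1 / k := by
      have : (0 : ℝ) < k := by exact_mod_cast hk
      positivity
    rw [← hY0 k hk] at ht ⊢
    exact abs_sub_sub_sign_mul_le_of_hasDerivAt_neg_div_sqrt hε (hODE k hk) ht
  have hlim : Tendsto (fun k : ℕ => 4 * √(1 / (k : ℝ))) atTop (𝓝 0) := by
    simpa using (tendsto_one_div_atTop_nhds_zero_nat.sqrt).const_mul 4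
  exact tendsto_iff_norm_sub_tendsto_zero.2
    (squeeze_zero' (Eventually.of_forall fun _ => norm_nonneg _) hbound hlim)

/-- The characteristics `Yᵏ` of the regularised Newtonian field in 1d,
`∂ₜ Yᵏ = −Yᵏ/((Yᵏ)² + 1/k)^{1/2}`, `Yᵏ(0) = y₀ ≠ 0`, converge pointwise for each
`t ∈ [0, |y₀|]` to `Y_t(y₀) = y₀ − sign(y₀) t`. -/
theorem stmt14 (y₀ : ℝ) (hy₀ : y₀ ≠ 0) (Y : ℕ → ℝ → ℝ)
    (hY0 : ∀ k : ℕ, 1 ≤ k → Y k 0 = y₀)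
    (hODE : ∀ k : ℕ, 1 ≤ k → ∀ t : ℝ,
      HasDerivAt (Y k) (-(Y k t) / Real.sqrt ((Y k t) ^ 2 + 1 / (k : ℝ))) t) :
    ∀ t ∈ Set.Icc (0 : ℝ) |y₀|,
      Tendsto (fun k : ℕ => Y k t) atTop (nhds (y₀ - Real.sign y₀ * t)) :=
  stmt14_general y₀ Y hY0 hODE
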